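/- arXiv:2005.03287 — 3 statements merged into one kernel-verified Lean document; each statement's English description precedes it below -/
import Mathlib

section
/- A matrix M ∈ ℝ^{n×n} is a P-matrix (all principal minors positive) if and only if the matrix MD + I - D is nonsingular for every diagonal matrix D = diag(d_i) with 0 ≤ d_i ≤ 1. -/
open Matrix

/-- A square real matrix is a `P`-matrix if all of its principal minors are positive. -/
def IsPMatrix {n : ℕ} (M : Matrix (Fin n) (Fin n) ℝ) : Prop :=
  ∀ s : Finset (Fin n), s.Nonempty →
    0 < (M.submatrix (fun i : s => (i : Fin n)) (fun i : s => (i : Fin n))).det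

/-- The (unordered) singular values of a real square matrix: square roots of the
eigenvalues of `Aᵀ * A`. -/
noncomputable def singVals {n : ℕ} (A : Matrix (Fin n) (Fin n) ℝ) : Fin n → ℝ :=
  fun i => Real.sqrt ((show (Aᵀ * A).IsHermitian by simpa using Matrix.isHermitian_conjTranspose_mul_self A).eigenvalues i)

/-- `svalsDecr A i` is the `i`-th largest singular value of `A` (so `svalsDecr A 0 = σ₁`). -/
noncomputable def svalsDecr {n : ℕ} (A : Matrix (Fin n) (Fin n) ℝ) : Fin n → ℝ :=
  fun i => singVals A (Tuple.sort (singVals A) (Fin.rev i))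

/-- The maximal singular value `σ₁`. -/
noncomputable def maxSV {n : ℕ} (A : Matrix (Fin n) (Fin n) ℝ) : ℝ :=
  ⨆ i, singVals A i

/-- The minimal singular value `σₙ`. -/
noncomputable def minSV {n : ℕ} (A : Matrix (Fin n) (Fin n) ℝ) : ℝ :=
  ⨅ i, singVals A i

/-- The spectral radius of a real square matrix (as the spectral radius of its
complexification), valued in `ℝ≥0∞`. -/
noncomputable def specRad {n : ℕ} (A : Matrix (Fin n) (Fin n) ℝ) : ENNReal :=
  spectralRadius ℂ (A.map (Complex.ofReal))

/-!
The `j`-th column of `M * diagonal d + 1 - diagonal d` is `dⱼ • Mⱼ + (1 - dⱼ) • eⱼ`, so expanding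
the determinant column by column gives `∑ₛ (∏_{i ∈ s} dᵢ) (∏_{i ∉ s} (1 - dᵢ)) det M[s]`. For
`d ∈ [0,1]ⁿ` this is a convex combination of the principal minors of `M`, hence positive when `M`
is a P-matrix. Conversely, the determinant is `1` at `d = 0` and `det M[s]` at the indicator of
`s`, so a nonpositive principal minor yields, by the intermediate value theorem along the segment
between them, a singular member of the family.
-/

theorem Finset.sum_prod_mul_prod_compl_one_sub {ι R : Type*} [Fintype ι] [DecidableEq ι]
    [CommRing R] (d : ι → R) :
    ∑ s : Finset ι, (∏ i ∈ s, d i) * ∏ i ∈ sᶜ, (1 - d i) = 1 := by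
  simpa [Finset.compl_eq_univ_sdiff] using (Finset.prod_add d (1 - d) univ).symm

namespace Matrix
variable {ι R : Type*} [Fintype ι] [DecidableEq ι] [CommRing R]

theorem det_diagonal_mul_add_diagonal_mul (A B : Matrix ι ι R) (d e : ι → R) :
    det (diagonal d * A + diagonal e * B) =
      ∑ s : Finset ι, ((∏ i ∈ s, d i) * ∏ i ∈ sᶜ, e i) * det (of (s.piecewise A.row B.row)) := by
  have hrows : diagonal d * A + diagonal e * B = (fun i => d i • A i) + fun i => e i • B i := by
    ext i j
    simp [diagonal_mul]
  have hpiece (s : Finset ι) : s.piecewise (fun i => d i • A i) (fun i => e i • B i) =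
      fun i => s.piecewise d e i • s.piecewise A.row B.row i := by
    ext i
    by_cases hi : i ∈ s <;> simp [hi, row, Finset.piecewise]
  rw [det, hrows, detRowAlternating.map_add_univ]
  refine Finset.sum_congr rfl fun s _ => ?_
  rw [hpiece, detRowAlternating.map_smul_univ, Finset.prod_piecewise, Finset.univ_inter,
    ← Finset.compl_eq_univ_sdiff, smul_eq_mul]
  rfl

theorem det_mul_diagonal_add_one_sub_diagonal (M : Matrix ι ι R) (d : ι → R) :
    det (M * diagonal d + 1 - diagonal d) =
      ∑ s : Finset ι, ((∏ i ∈ s, d i) * ∏ i ∈ sᶜ, (1 - d i)) *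
        (M.submatrix ((↑) : s → ι) (↑)).det := by
  have htranspose : (M * diagonal d + 1 - diagonal d)ᵀ =
      diagonal d * Mᵀ + diagonal (fun i => 1 - d i) * 1 := by
    ext i j
    obtain rfl | h := eq_or_ne i j
    · simp [mul_comm, add_sub_assoc]
    · simp [h, h.symm, mul_comm]
  rw [← det_transpose, htranspose, det_diagonal_mul_add_diagonal_mul]
  refine Finset.sum_congr rfl fun s _ => ?_
  rw [det_piecewise_one_eq_submatrix_det, ← transpose_submatrix, det_transpose]

theorem det_mul_diagonal_indicator_add_one_sub_diagonal_indicator (M : Matrix ι ι R)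
    (s : Finset ι) :
    det (M * diagonal (fun i => if i ∈ s then 1 else 0) + 1 -
        diagonal (fun i => if i ∈ s then 1 else 0)) =
      (M.submatrix ((↑) : s → ι) (↑)).det := by
  have htranspose : (M * diagonal (fun i => if i ∈ s then 1 else 0) + 1 -
      diagonal (fun i => if i ∈ s then 1 else 0))ᵀ =
        of (s.piecewise Mᵀ.row (1 : Matrix ι ι R).row) := by
    ext i j
    obtain rfl | h := eq_or_ne i j
    · by_cases hi : i ∈ s <;> simp [hi, Finset.piecewise, row]
    · by_cases hi : i ∈ s <;> simp [hi, h, h.symm, Finset.piecewise, row]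
  rw [← det_transpose, htranspose, det_piecewise_one_eq_submatrix_det, ← transpose_submatrix,
    det_transpose]

theorem exists_det_mul_diagonal_add_one_sub_diagonal_eq_zero_of_nonpos (M : Matrix ι ι ℝ)
    {d : ι → ℝ} (hd : ∀ i, d i ∈ Set.Icc (0 : ℝ) 1)
    (hdet : det (M * diagonal d + 1 - diagonal d) ≤ 0) :
    ∃ d' : ι → ℝ, (∀ i, d' i ∈ Set.Icc (0 : ℝ) 1) ∧
      det (M * diagonal d' + 1 - diagonal d') = 0 := by
  set f : ℝ → ℝ := fun t => det (M * diagonal (t • d) + 1 - diagonal (t • d))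
  have hf : Continuous f := by fun_prop
  have hzero : (0 : ℝ) ∈ Set.Icc (f 1) (f 0) := ⟨by simpa [f] using hdet, by simp [f]⟩
  obtain ⟨t, ht, hft⟩ := intermediate_value_Icc' zero_le_one hf.continuousOn hzero
  exact ⟨t • d, fun i => ⟨mul_nonneg ht.1 (hd i).1, mul_le_one₀ ht.2 (hd i).1 (hd i).2⟩, hft⟩

end Matrix

theorem IsPMatrix.det_submatrix_pos {n : ℕ} {M : Matrix (Fin n) (Fin n) ℝ} (hM : IsPMatrix M)
    (s : Finset (Fin n)) : 0 < (M.submatrix ((↑) : s → Fin n) (↑)).det := by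
  rcases s.eq_empty_or_nonempty with rfl | hs
  · simp
  · exact hM s hs

theorem IsPMatrix.det_mul_diagonal_add_one_sub_diagonal_pos {n : ℕ}
    {M : Matrix (Fin n) (Fin n) ℝ} (hM : IsPMatrix M) {d : Fin n → ℝ}
    (hd : ∀ i, d i ∈ Set.Icc (0 : ℝ) 1) :
    0 < det (M * diagonal d + 1 - diagonal d) := by
  set w : Finset (Fin n) → ℝ := fun s => (∏ i ∈ s, d i) * ∏ i ∈ sᶜ, (1 - d i)
  have hw (s : Finset (Fin n)) : 0 ≤ w s :=
    mul_nonneg (Finset.prod_nonneg fun i _ => (hd i).1)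
      (Finset.prod_nonneg fun i _ => sub_nonneg.mpr (hd i).2)
  obtain ⟨s, -, hs⟩ := Finset.exists_lt_of_sum_lt (s := Finset.univ) (f := fun _ => (0 : ℝ))
    (g := w) (by simp [w, Finset.sum_prod_mul_prod_compl_one_sub])
  rw [det_mul_diagonal_add_one_sub_diagonal]
  exact Finset.sum_pos' (fun s _ => mul_nonneg (hw s) (hM.det_submatrix_pos s).le)
    ⟨s, Finset.mem_univ s, mul_pos hs (hM.det_submatrix_pos s)⟩

theorem stmt0 {n : ℕ} (M : Matrix (Fin n) (Fin n) ℝ) :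
    IsPMatrix M ↔
      ∀ d : Fin n → ℝ, (∀ i, d i ∈ Set.Icc (0 : ℝ) 1) →
        IsUnit (M * Matrix.diagonal d + 1 - Matrix.diagonal d) := by
  simp only [isUnit_iff_isUnit_det, isUnit_iff_ne_zero]
  refine ⟨fun hM d hd => (hM.det_mul_diagonal_add_one_sub_diagonal_pos hd).ne', fun h s _ => ?_⟩
  by_contra! hminor
  rw [← det_mul_diagonal_indicator_add_one_sub_diagonal_indicator] at hminor
  obtain ⟨d, hd, hdet⟩ := exists_det_mul_diagonal_add_one_sub_diagonal_eq_zero_of_nonpos M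
    (fun i => by split_ifs <;> simp) hminor
  exact h d hd hdet
end

section
/- Let A, B ∈ ℝ^{n×n}. The GAVE Ax + B|x| = b has a unique solution for every b ∈ ℝ^n if and only if A + B − 2BD is nonsingular for every diagonal matrix D = diag(d_i) with 0 ≤ d_i ≤ 1. -/
/-!
For `x, y` the difference `|x| - |y|` equals `δ * (x - y)` for some `δ` with `|δ i| ≤ 1`, and
conversely every `v` and every such `δ` arise in this way from some pair `x, y`. Hence
`x ↦ A x + B |x|` is injective iff every `A + B diag δ` with `|δ i| ≤ 1` is nonsingular, and this
is the stated condition because `A + B - 2 B D = A + B (I - 2 D)`.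

For surjectivity write `x = z - w` with `z, w ≥ 0` and `z i * w i = 0`, so that `|x| = z + w` and
the equation becomes the linear complementarity problem `w = M z + q`, `M = (A - B)⁻¹ (A + B)`.
The same regularity shows that `M` reverses the sign of no nonzero vector, which makes every such
problem solvable, by induction on the dimension: fix the last unknown to `t` and solve the smaller
problem. Coercivity of `M` makes the smaller solution Lipschitz in `t` and the last residual grow
at least linearly in `t`, so the intermediate value theorem gives a complementary value of `t`.
-/

open Matrix

section Complementarity

variable {ι : Type*} [Fintype ι]

/-- Gale–Nikaido: for real matrices this is equivalent to `IsPMatrix`. -/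
def NonSignReversing (M : Matrix ι ι ℝ) : Prop :=
  ∀ z : ι → ℝ, z ≠ 0 → ∃ k, 0 < z k * (M *ᵥ z) k

structure IsLCPSolution (M : Matrix ι ι ℝ) (q z : ι → ℝ) : Prop where
  nonneg : 0 ≤ z
  residual_nonneg : 0 ≤ M *ᵥ z + q
  complementary : ∀ k, z k * (M *ᵥ z + q) k = 0

lemma IsLCPSolution.sub_mul_sub_nonpos {M : Matrix ι ι ℝ} {q₁ q₂ z₁ z₂ : ι → ℝ}
    (h₁ : IsLCPSolution M q₁ z₁) (h₂ : IsLCPSolution M q₂ z₂) (k : ι) :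
    (z₁ k - z₂ k) * ((M *ᵥ z₁ + q₁) k - (M *ᵥ z₂ + q₂) k) ≤ 0 := by
  -- by complementarity the product is `-(z₁ k * w₂ k + z₂ k * w₁ k)` for the residuals `wᵢ`
  nlinarith [h₁.complementary k, h₂.complementary k,
    mul_nonneg (h₁.nonneg k) (h₂.residual_nonneg k),
    mul_nonneg (h₂.nonneg k) (h₁.residual_nonneg k)]

lemma NonSignReversing.exists_coercive {M : Matrix ι ι ℝ} (hM : NonSignReversing M) :
    ∃ c > 0, ∀ z : ι → ℝ, z ≠ 0 → ∃ k, c * ‖z‖ ^ 2 ≤ z k * (M *ᵥ z) k := by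
  cases isEmpty_or_nonempty ι
  · exact ⟨1, one_pos, fun z hz => (hz (Subsingleton.elim z 0)).elim⟩
  set g : (ι → ℝ) → ℝ := fun z => Finset.univ.sup' Finset.univ_nonempty fun k => z k * (M *ᵥ z) k
  have hg : Continuous g := Continuous.finset_sup'_apply _ fun k _ => by fun_prop
  obtain ⟨z₀, hz₀, hmin⟩ := (isCompact_sphere (0 : ι → ℝ) 1).exists_isMinOn
    (NormedSpace.sphere_nonempty.mpr zero_le_one) hg.continuousOn
  obtain ⟨k₀, hk₀⟩ := hM z₀ (ne_zero_of_mem_unit_sphere ⟨z₀, hz₀⟩)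
  refine ⟨g z₀, hk₀.trans_le (Finset.le_sup' (fun k => z₀ k * (M *ᵥ z₀) k) (Finset.mem_univ k₀)),
    fun z hz => ?_⟩
  have hr : 0 < ‖z‖ := norm_pos_iff.mpr hz
  obtain ⟨k, -, hk⟩ := Finset.exists_mem_eq_sup' Finset.univ_nonempty
    fun k => (‖z‖⁻¹ • z) k * (M *ᵥ (‖z‖⁻¹ • z)) k
  have hle : g z₀ ≤ g (‖z‖⁻¹ • z) := hmin (by simp [norm_smul, hr.ne'])
  rw [show g (‖z‖⁻¹ • z) = _ from hk, mulVec_smul] at hle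
  simp only [Pi.smul_apply, smul_eq_mul] at hle
  refine ⟨k, ?_⟩
  calc g z₀ * ‖z‖ ^ 2 ≤ ‖z‖⁻¹ * z k * (‖z‖⁻¹ * (M *ᵥ z) k) * ‖z‖ ^ 2 := by gcongr
    _ = z k * (M *ᵥ z) k := by field_simp

lemma IsLCPSolution.mul_norm_sub_le {M : Matrix ι ι ℝ} {c : ℝ}
    (hc : ∀ z : ι → ℝ, z ≠ 0 → ∃ k, c * ‖z‖ ^ 2 ≤ z k * (M *ᵥ z) k)
    {q₁ q₂ z₁ z₂ : ι → ℝ} (h₁ : IsLCPSolution M q₁ z₁) (h₂ : IsLCPSolution M q₂ z₂) :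
    c * ‖z₁ - z₂‖ ≤ ‖q₁ - q₂‖ := by
  rcases eq_or_ne z₁ z₂ with rfl | hne
  · simp
  have hd : 0 < ‖z₁ - z₂‖ := norm_pos_iff.mpr (sub_ne_zero.mpr hne)
  obtain ⟨k, hk⟩ := hc _ (sub_ne_zero.mpr hne)
  have hMd : (M *ᵥ (z₁ - z₂)) k = ((M *ᵥ z₁ + q₁) k - (M *ᵥ z₂ + q₂) k) - (q₁ k - q₂ k) := by
    simp only [mulVec_sub, Pi.sub_apply, Pi.add_apply]; ring
  have hq : -((z₁ k - z₂ k) * (q₁ k - q₂ k)) ≤ ‖z₁ - z₂‖ * ‖q₁ - q₂‖ :=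
    calc _ ≤ |(z₁ - z₂) k| * |(q₁ - q₂) k| := by rw [← abs_mul]; exact neg_le_abs _
      _ ≤ ‖z₁ - z₂‖ * ‖q₁ - q₂‖ := by
        gcongr
        exacts [norm_le_pi_norm (z₁ - z₂) k, norm_le_pi_norm (q₁ - q₂) k]
  rw [hMd, Pi.sub_apply] at hk
  have := h₁.sub_mul_sub_nonpos h₂ k
  nlinarith

lemma NonSignReversing.continuous_of_isLCPSolution {M : Matrix ι ι ℝ} (hM : NonSignReversing M)
    {S : (ι → ℝ) → ι → ℝ} (hS : ∀ q, IsLCPSolution M q (S q)) : Continuous S := by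
  obtain ⟨c, hc0, hc⟩ := hM.exists_coercive
  refine (LipschitzWith.of_dist_le_mul (K := c⁻¹.toNNReal) fun q₁ q₂ => ?_).continuous
  rw [dist_eq_norm, dist_eq_norm, Real.coe_toNNReal _ (inv_nonneg.mpr hc0.le), ← div_eq_inv_mul,
    le_div_iff₀' hc0]
  exact (hS q₁).mul_norm_sub_le hc (hS q₂)

end Complementarity

lemma mulVec_snoc_castSucc {m : ℕ} (M : Matrix (Fin (m + 1)) (Fin (m + 1)) ℝ) (z : Fin m → ℝ)
    (t : ℝ) (j : Fin m) :
    (M *ᵥ Fin.snoc z t) j.castSucc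
      = (M.submatrix Fin.castSucc Fin.castSucc *ᵥ z) j + t * M j.castSucc (Fin.last m) := by
  simp only [mulVec, dotProduct, Fin.sum_univ_castSucc, Fin.snoc_castSucc, Fin.snoc_last,
    submatrix_apply]
  ring

lemma NonSignReversing.submatrix_castSucc {m : ℕ} {M : Matrix (Fin (m + 1)) (Fin (m + 1)) ℝ}
    (hM : NonSignReversing M) : NonSignReversing (M.submatrix Fin.castSucc Fin.castSucc) := by
  intro z hz
  have hz' : (Fin.snoc z 0 : Fin (m + 1) → ℝ) ≠ 0 := fun h =>
    hz (funext fun j => by simpa using congrFun h j.castSucc)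
  obtain ⟨k, hk⟩ := hM _ hz'
  induction k using Fin.lastCases with
  | last => simp at hk
  | cast j => exact ⟨j, by simpa [mulVec_snoc_castSucc] using hk⟩

namespace LCP

variable {m : ℕ} (M : Matrix (Fin (m + 1)) (Fin (m + 1)) ℝ) (q : Fin (m + 1) → ℝ)
  (S : (Fin m → ℝ) → Fin m → ℝ)

/-- With the last unknown fixed to `t`, the first `m` conditions of the LCP `(M, q)` form the LCP
of the leading principal submatrix with this right-hand side. -/
def reducedRhs (t : ℝ) : Fin m → ℝ := fun j => q j.castSucc + t * M j.castSucc (Fin.last m)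

def extend (t : ℝ) : Fin (m + 1) → ℝ := Fin.snoc (S (reducedRhs M q t)) t

lemma extend_castSucc (t : ℝ) (j : Fin m) : extend M q S t j.castSucc = S (reducedRhs M q t) j :=
  Fin.snoc_castSucc ..

lemma extend_last (t : ℝ) : extend M q S t (Fin.last m) = t :=
  Fin.snoc_last ..

lemma residual_extend_castSucc (t : ℝ) (j : Fin m) :
    (M *ᵥ extend M q S t + q) j.castSucc
      = (M.submatrix Fin.castSucc Fin.castSucc *ᵥ S (reducedRhs M q t) + reducedRhs M q t) j := by
  simp only [Pi.add_apply, extend, mulVec_snoc_castSucc, reducedRhs]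
  ring

variable {M q S}

lemma continuous_residual_extend_last (hS : Continuous S) :
    Continuous fun t => (M *ᵥ extend M q S t + q) (Fin.last m) := by
  have : Continuous (reducedRhs M q) := by unfold reducedRhs; fun_prop
  unfold extend
  fun_prop

variable (hS : ∀ r, IsLCPSolution (M.submatrix Fin.castSucc Fin.castSucc) r (S r))
include hS

lemma isLCPSolution_extend {t : ℝ} (ht : 0 ≤ t) (hres : 0 ≤ (M *ᵥ extend M q S t + q) (Fin.last m))
    (hcompl : t * (M *ᵥ extend M q S t + q) (Fin.last m) = 0) :
    IsLCPSolution M q (extend M q S t) := by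
  refine ⟨fun k => ?_, fun k => ?_, fun k => ?_⟩ <;> induction k using Fin.lastCases <;>
    simp only [Pi.zero_apply, extend_castSucc, extend_last, residual_extend_castSucc]
  exacts [ht, (hS _).nonneg _, hres, (hS _).residual_nonneg _, hcompl, (hS _).complementary _]

lemma residual_extend_last_growth {c : ℝ} (hc0 : 0 < c)
    (hc : ∀ z : Fin (m + 1) → ℝ, z ≠ 0 → ∃ k, c * ‖z‖ ^ 2 ≤ z k * (M *ᵥ z) k)
    {t₁ t₂ : ℝ} (hlt : t₁ < t₂) :
    c * (t₂ - t₁) ≤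
      (M *ᵥ extend M q S t₂ + q) (Fin.last m) - (M *ᵥ extend M q S t₁ + q) (Fin.last m) := by
  set d := extend M q S t₂ - extend M q S t₁
  have hdl : d (Fin.last m) = t₂ - t₁ := by simp [d, extend_last]
  have hd : t₂ - t₁ ≤ ‖d‖ := hdl ▸ (le_abs_self _).trans (norm_le_pi_norm d _)
  have hpos : 0 < c * ‖d‖ ^ 2 := by
    have : 0 < ‖d‖ := by linarith
    positivity
  obtain ⟨k, hk⟩ := hc d (norm_pos_iff.mp (by linarith))
  rw [show M *ᵥ d = (M *ᵥ extend M q S t₂ + q) - (M *ᵥ extend M q S t₁ + q) by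
    simp [d, mulVec_sub]] at hk
  induction k using Fin.lastCases with
  | last =>
    rw [hdl, Pi.sub_apply] at hk
    have := mul_le_mul_of_nonneg_left (pow_le_pow_left₀ (sub_pos.mpr hlt).le hd 2) hc0.le
    refine le_of_mul_le_mul_right ?_ (sub_pos.mpr hlt)
    linarith
  | cast j =>
    have := (hS (reducedRhs M q t₂)).sub_mul_sub_nonpos (hS (reducedRhs M q t₁)) j
    simp only [d, Pi.sub_apply, extend_castSucc, residual_extend_castSucc] at hk
    linarith

end LCP

theorem NonSignReversing.exists_isLCPSolution :
    ∀ {n : ℕ} {M : Matrix (Fin n) (Fin n) ℝ}, NonSignReversing M → ∀ q, ∃ z, IsLCPSolution M q z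
  | 0, _, _, _ => ⟨0, ⟨le_rfl, fun k => k.elim0, fun k => k.elim0⟩⟩
  | m + 1, M, hM, q => by
    choose S hS using hM.submatrix_castSucc.exists_isLCPSolution
    set h : ℝ → ℝ := fun t => (M *ᵥ LCP.extend M q S t + q) (Fin.last m)
    have hcont : Continuous h := LCP.continuous_residual_extend_last
      (hM.submatrix_castSucc.continuous_of_isLCPSolution hS)
    obtain ⟨c, hc0, hc⟩ := hM.exists_coercive
    by_cases h0 : 0 ≤ h 0
    · exact ⟨_, LCP.isLCPSolution_extend hS le_rfl h0 (zero_mul _)⟩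
    push Not at h0
    set T := -h 0 / c
    have hT : 0 < T := div_pos (neg_pos.mpr h0) hc0
    have hhT : 0 ≤ h T := by
      have := LCP.residual_extend_last_growth (q := q) hS hc0 hc hT
      rw [sub_zero, mul_div_cancel₀ _ hc0.ne'] at this
      linarith
    obtain ⟨t, ht, hht⟩ := intermediate_value_Icc hT.le hcont.continuousOn ⟨h0.le, hhT⟩
    exact ⟨_, LCP.isLCPSolution_extend hS ht.1 hht.ge (by simp only [h] at hht; rw [hht, mul_zero])⟩

section OrderedField

variable {K : Type*} [Field K] [LinearOrder K] [IsStrictOrderedRing K]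

lemma exists_eq_mul_of_abs_le {u v : K} (h : |u| ≤ |v|) : ∃ δ, |δ| ≤ 1 ∧ u = δ * v := by
  rcases eq_or_ne v 0 with rfl | hv
  · exact ⟨0, by simp, by simpa using h⟩
  · refine ⟨u / v, ?_, (div_mul_cancel₀ u hv).symm⟩
    rw [abs_div]
    exact div_le_one_of_le₀ h (abs_nonneg _)

lemma exists_sub_eq_and_abs_sub_abs_eq {δ : K} (hδ : |δ| ≤ 1) (v : K) :
    ∃ a b : K, a - b = v ∧ |a| - |b| = δ * v := by
  refine ⟨(v + δ * |v|) / 2, (δ * |v| - v) / 2, by ring, ?_⟩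
  obtain ⟨h₁, h₂⟩ := abs_le.mp hδ
  rcases le_total 0 v with hv | hv
  · rw [abs_of_nonneg hv, abs_of_nonneg (by nlinarith), abs_of_nonpos (by nlinarith)]
    ring
  · rw [abs_of_nonpos hv, abs_of_nonpos (by nlinarith), abs_of_nonneg (by nlinarith)]
    ring

lemma abs_sub_eq_add_of_mul_eq_zero {a b : K} (ha : 0 ≤ a) (hb : 0 ≤ b) (hab : a * b = 0) :
    |a - b| = a + b := by
  rcases mul_eq_zero.mp hab with rfl | rfl
  · simp [hb]
  · simp [ha]

end OrderedField

lemma isUnit_of_forall_mulVec_eq_zero {ι K : Type*} [Fintype ι] [DecidableEq ι] [Field K]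
    {M : Matrix ι ι K} (h : ∀ v, M *ᵥ v = 0 → v = 0) : IsUnit M := by
  rw [← mulVec_injective_iff_isUnit]
  exact (injective_iff_map_eq_zero M.mulVecLin).mpr h

section GAVE

variable {ι : Type*} [Fintype ι] [DecidableEq ι] {A B : Matrix ι ι ℝ}

def IsUnitOnCube (A B : Matrix ι ι ℝ) : Prop :=
  ∀ δ : ι → ℝ, (∀ i, |δ i| ≤ 1) → IsUnit (A + B * diagonal δ)

lemma IsUnitOnCube.eq_zero_of_mulVec_eq_zero (H : IsUnitOnCube A B) {δ v : ι → ℝ}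
    (hδ : ∀ i, |δ i| ≤ 1) (hv : (A + B * diagonal δ) *ᵥ v = 0) : v = 0 :=
  mulVec_injective_iff_isUnit.mpr (H δ hδ) (hv.trans (mulVec_zero _).symm)

lemma IsUnitOnCube.isUnit_sub (H : IsUnitOnCube A B) : IsUnit (A - B) := by
  convert H (fun _ => -1) (fun _ => by simp) using 1
  ext i j
  simp [sub_eq_add_neg]

lemma add_mul_diagonal_mulVec {u v δ : ι → ℝ} (h : u = δ * v) :
    (A + B * diagonal δ) *ᵥ v = A *ᵥ v + B *ᵥ u := by
  rw [add_mulVec, ← mulVec_mulVec, h]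
  congr 2
  ext i
  exact mulVec_diagonal ..

lemma IsUnitOnCube.injective_gave (H : IsUnitOnCube A B) :
    Function.Injective fun x => A *ᵥ x + B *ᵥ |x| := by
  intro x y (hxy : A *ᵥ x + B *ᵥ |x| = A *ᵥ y + B *ᵥ |y|)
  choose δ hδ hxy' using fun i => exists_eq_mul_of_abs_le (abs_abs_sub_abs_le_abs_sub (x i) (y i))
  refine sub_eq_zero.mp (H.eq_zero_of_mulVec_eq_zero hδ ?_)
  rw [add_mul_diagonal_mulVec (funext hxy' : |x| - |y| = δ * (x - y)), mulVec_sub, mulVec_sub,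
    sub_add_sub_comm, hxy, sub_self]

lemma isUnitOnCube_of_injective_gave (h : Function.Injective fun x => A *ᵥ x + B *ᵥ |x|) :
    IsUnitOnCube A B := by
  intro δ hδ
  refine isUnit_of_forall_mulVec_eq_zero fun v hv => ?_
  choose x y hxy habs using fun i => exists_sub_eq_and_abs_sub_abs_eq (hδ i) (v i)
  have hv' : v = x - y := funext fun i => (hxy i).symm
  subst hv'
  rw [add_mul_diagonal_mulVec (funext habs : |x| - |y| = δ * (x - y)), mulVec_sub, mulVec_sub,
    sub_add_sub_comm, sub_eq_zero] at hv
  rw [h hv, sub_self]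

lemma IsUnitOnCube.nonSignReversing (H : IsUnitOnCube A B) :
    NonSignReversing ((A - B)⁻¹ * (A + B)) := by
  have hN := (isUnit_iff_isUnit_det _).mp H.isUnit_sub
  intro z hz
  by_contra! hzw
  set w := ((A - B)⁻¹ * (A + B)) *ᵥ z
  have hw : (A - B) *ᵥ w = (A + B) *ᵥ z := by
    rw [mulVec_mulVec, mul_nonsing_inv_cancel_left _ _ hN]
  choose δ hδ hzw' using fun k =>
    exists_eq_mul_of_abs_le (sq_le_sq.mp (by nlinarith [hzw k] : (z k + w k) ^ 2 ≤ (z k - w k) ^ 2))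
  have hzero : z - w = 0 := by
    refine H.eq_zero_of_mulVec_eq_zero hδ ?_
    rw [add_mul_diagonal_mulVec (funext hzw' : z + w = δ * (z - w)), mulVec_sub, mulVec_add]
    rw [sub_mulVec, add_mulVec] at hw
    calc A *ᵥ z - A *ᵥ w + (B *ᵥ z + B *ᵥ w) = -((A *ᵥ w - B *ᵥ w) - (A *ᵥ z + B *ᵥ z)) := by abel
      _ = 0 := by rw [hw, sub_self, neg_zero]
  have hzw_eq : z = w := sub_eq_zero.mp hzero
  refine hz (funext fun k => mul_self_eq_zero.mp (le_antisymm ?_ (mul_self_nonneg _)))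
  simpa only [← hzw_eq] using hzw k

lemma IsUnitOnCube.surjective_gave {n : ℕ} {A B : Matrix (Fin n) (Fin n) ℝ}
    (H : IsUnitOnCube A B) : Function.Surjective fun x => A *ᵥ x + B *ᵥ |x| := by
  intro b
  have hN := (isUnit_iff_isUnit_det _).mp H.isUnit_sub
  obtain ⟨z, hz⟩ := H.nonSignReversing.exists_isLCPSolution (-((A - B)⁻¹ *ᵥ b))
  set w := ((A - B)⁻¹ * (A + B)) *ᵥ z + -((A - B)⁻¹ *ᵥ b)
  have hw : (A - B) *ᵥ w = (A + B) *ᵥ z - b := by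
    rw [mulVec_add, mulVec_neg, mulVec_mulVec, mulVec_mulVec, mul_nonsing_inv_cancel_left _ _ hN,
      mul_nonsing_inv _ hN, one_mulVec, sub_eq_add_neg]
  have habs : |z - w| = z + w :=
    funext fun k => abs_sub_eq_add_of_mul_eq_zero (hz.nonneg k) (hz.residual_nonneg k)
      (hz.complementary k)
  clear_value w
  refine ⟨z - w, ?_⟩
  dsimp only
  rw [habs]
  calc A *ᵥ (z - w) + B *ᵥ (z + w) = (A + B) *ᵥ z - (A - B) *ᵥ w := by
        rw [mulVec_sub, mulVec_add, add_mulVec, sub_mulVec]; abel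
    _ = b := by rw [hw, sub_sub_cancel]

lemma isUnitOnCube_iff_bijective_gave {n : ℕ} {A B : Matrix (Fin n) (Fin n) ℝ} :
    IsUnitOnCube A B ↔ Function.Bijective fun x => A *ᵥ x + B *ᵥ |x| :=
  ⟨fun H => ⟨H.injective_gave, H.surjective_gave⟩, fun h => isUnitOnCube_of_injective_gave h.1⟩

lemma forall_isUnit_add_sub_two_smul_iff :
    (∀ d : ι → ℝ, (∀ i, d i ∈ Set.Icc (0 : ℝ) 1) →
      IsUnit (A + B - (2 : ℝ) • (B * diagonal d))) ↔ IsUnitOnCube A B := by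
  have key : ∀ d : ι → ℝ,
      A + B - (2 : ℝ) • (B * diagonal d) = A + B * diagonal (fun i => 1 - 2 * d i) := by
    intro d
    ext i j
    simp only [Matrix.sub_apply, Matrix.add_apply, Matrix.smul_apply, mul_diagonal, smul_eq_mul]
    ring
  simp only [key, Set.mem_Icc]
  refine ⟨fun h δ hδ => ?_, fun H d hd => H _ fun i => abs_le.mpr ⟨?_, ?_⟩⟩
  · convert h (fun i => (1 - δ i) / 2) fun i => ?_
    · ring
    · have := abs_le.mp (hδ i)
      constructor <;> linarith
  all_goals linarith [hd i]

end GAVE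

theorem stmt8 {n : ℕ} (A B : Matrix (Fin n) (Fin n) ℝ) :
    (∀ b : Fin n → ℝ, ∃! x : Fin n → ℝ, A *ᵥ x + B *ᵥ |x| = b) ↔
      ∀ d : Fin n → ℝ, (∀ i, d i ∈ Set.Icc (0 : ℝ) 1) →
        IsUnit (A + B - (2 : ℝ) • (B * Matrix.diagonal d)) := by
  rw [forall_isUnit_add_sub_two_smul_iff, isUnitOnCube_iff_bijective_gave,
    Function.bijective_iff_existsUnique]
end

section
/- If A ∈ ℝ^{n×n} is nonsingular and ρ(A^{-1} D̄) < 1 for every diagonal matrix D̄ with diagonal entries in [−1,1], then the AVE Ax + |x| = b has a unique solution for every b ∈ ℝ^n. -/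
/-!
Since `A + D = A (1 + A⁻¹ D)` and `ρ(A⁻¹ D) < 1`, every `A + D` with `D` diagonal in the box
`[-1, 1]ⁿ` is nonsingular, and by compactness of the box `‖v‖ ≤ K ‖(A + D) v‖` uniformly in `D`.
As `|x| - |y| = D (x - y)` for such a `D`, each map `F_t x = A x + t |x|`, `0 ≤ t ≤ 1`, is
`K`-antilipschitz, in particular injective. Surjectivity propagates from `t = 0` (the map `A`)
to `t = 1` in steps of size `δ < 1 / K`: solving `A x + (t + δ) |x| = b` is a fixed point problem
for the contraction `x ↦ F_t⁻¹ (b - δ |x|)`.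
-/

open Matrix

open scoped NNReal

theorem AntilipschitzWith.surjective_add_of_lipschitzWith {α E : Type*} [MetricSpace α]
    [CompleteSpace α] [NormedAddCommGroup E] {f g : α → E} {Kf Kg : ℝ≥0}
    (hf : AntilipschitzWith Kf f) (hf_surj : Function.Surjective f)
    (hg : LipschitzWith Kg g) (hK : Kf * Kg < 1) : Function.Surjective (f + g) := by
  intro b
  obtain ⟨f', hf'⟩ := hf_surj.hasRightInverse
  have : Nonempty α := ⟨f' b⟩
  have hc : ContractingWith (Kf * Kg) (fun x => f' (b - g x)) :=
    ⟨hK, (hf.to_rightInverse hf').comp (by simpa using (LipschitzWith.const b).sub hg)⟩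
  set x := ContractingWith.fixedPoint _ hc
  have hx : f x = b - g x :=
    calc f x = f (f' (b - g x)) := congrArg f hc.fixedPoint_isFixedPt.symm
      _ = b - g x := hf' _
  exact ⟨x, by rw [Pi.add_apply, hx, sub_add_cancel]⟩

section
variable {ι : Type*} [Fintype ι]

theorem lipschitzWith_smul_abs (δ : ℝ≥0) : LipschitzWith δ fun x : ι → ℝ => (δ : ℝ) • |x| :=
  LipschitzWith.of_dist_le_mul fun x y => by
    rw [dist_smul₀, Real.norm_of_nonneg δ.coe_nonneg]
    gcongr
    refine (dist_pi_le_iff dist_nonneg).2 fun i => (dist_le_pi_dist x y i).trans' ?_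
    simpa [Real.dist_eq] using abs_abs_sub_abs_le_abs_sub (x i) (y i)

def aveMap (A : Matrix ι ι ℝ) (t : ℝ) (x : ι → ℝ) : ι → ℝ := A *ᵥ x + t • |x|

theorem aveMap_add (A : Matrix ι ι ℝ) (t δ : ℝ) :
    aveMap A (t + δ) = aveMap A t + fun x => δ • |x| := by
  funext x
  simp only [aveMap, Pi.add_apply, add_smul, add_assoc]

variable [DecidableEq ι]

theorem abs_sub_abs_eq_diagonal_mulVec (x y : ι → ℝ) :
    ∃ d : ι → ℝ, (∀ i, d i ∈ Set.Icc (-1 : ℝ) 1) ∧ |x| - |y| = diagonal d *ᵥ (x - y) := by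
  refine ⟨fun i => (|x i| - |y i|) / (x i - y i), fun i => ?_, funext fun i => ?_⟩
  · rw [Set.mem_Icc, ← abs_le, abs_div]
    exact div_le_one_of_le₀ (abs_abs_sub_abs_le_abs_sub _ _) (abs_nonneg _)
  · rcases eq_or_ne (x i) (y i) with hi | hi
    · simp [mulVec_diagonal, hi]
    · simp [mulVec_diagonal, div_mul_cancel₀ _ (sub_ne_zero.2 hi)]

theorem exists_norm_le_mul_norm_add_diagonal_mulVec (A : Matrix ι ι ℝ)
    (hreg : ∀ d : ι → ℝ, (∀ i, d i ∈ Set.Icc (-1 : ℝ) 1) → IsUnit (A + diagonal d)) :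
    ∃ K : ℝ≥0, ∀ d : ι → ℝ, (∀ i, d i ∈ Set.Icc (-1 : ℝ) 1) →
      ∀ v, ‖v‖ ≤ K * ‖(A + diagonal d) *ᵥ v‖ := by
  set S := (Set.univ.pi fun _ : ι => Set.Icc (-1 : ℝ) 1) ×ˢ Metric.sphere (0 : ι → ℝ) 1
  have hS : IsCompact S := (isCompact_univ_pi fun _ => isCompact_Icc).prod (isCompact_sphere 0 1)
  have hcont : Continuous fun p : (ι → ℝ) × (ι → ℝ) => ‖(A + diagonal p.1) *ᵥ p.2‖ :=
    ((continuous_const.add continuous_fst.matrix_diagonal).matrix_mulVec continuous_snd).norm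
  have hpos : ∀ p ∈ S, 0 < ‖(A + diagonal p.1) *ᵥ p.2‖ := by
    rintro ⟨d, v⟩ ⟨hd, hv⟩
    refine norm_pos_iff.2 fun h0 => ne_zero_of_mem_unit_sphere ⟨v, hv⟩ ?_
    exact mulVec_injective_iff_isUnit.2 (hreg d fun i => hd i trivial)
      (h0.trans (mulVec_zero _).symm)
  obtain ⟨c, hc, hcS⟩ := hS.exists_forall_le' hcont.continuousOn hpos
  refine ⟨c⁻¹.toNNReal, fun d hd v => ?_⟩
  rcases eq_or_ne v 0 with rfl | hv
  · simp
  have hv' : 0 < ‖v‖ := norm_pos_iff.2 hv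
  have hunit := hcS (d, ‖v‖⁻¹ • v) ⟨fun i _ => hd i, by simp [norm_smul, hv'.ne']⟩
  rw [mulVec_smul, norm_smul, norm_inv, norm_norm, inv_mul_eq_div, le_div_iff₀ hv'] at hunit
  rw [Real.coe_toNNReal _ (inv_nonneg.2 hc.le), ← div_eq_inv_mul, le_div_iff₀ hc, mul_comm]
  exact hunit

theorem antilipschitzWith_aveMap {A : Matrix ι ι ℝ} {K : ℝ≥0}
    (hK : ∀ d : ι → ℝ, (∀ i, d i ∈ Set.Icc (-1 : ℝ) 1) → ∀ v, ‖v‖ ≤ K * ‖(A + diagonal d) *ᵥ v‖)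
    {t : ℝ} (ht : t ∈ Set.Icc (0 : ℝ) 1) : AntilipschitzWith K (aveMap A t) :=
  AntilipschitzWith.of_le_mul_dist fun x y => by
    obtain ⟨d, hd, hxy⟩ := abs_sub_abs_eq_diagonal_mulVec x y
    have htd : ∀ i, (t • d) i ∈ Set.Icc (-1 : ℝ) 1 := fun i => by
      rw [Set.mem_Icc, ← abs_le, Pi.smul_apply, smul_eq_mul, abs_mul]
      exact mul_le_one₀ (abs_le.2 ⟨by linarith [ht.1], ht.2⟩) (abs_nonneg _) (abs_le.2 (hd i))
    have hdiff : aveMap A t x - aveMap A t y = (A + diagonal (t • d)) *ᵥ (x - y) := by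
      funext i
      have hi := congrFun hxy i
      simp only [Pi.sub_apply, Pi.abs_apply, mulVec_diagonal] at hi
      simp only [aveMap, Pi.sub_apply, Pi.add_apply, Pi.smul_apply, Pi.abs_apply, smul_eq_mul,
        add_mulVec, mulVec_sub, mulVec_diagonal]
      linear_combination t * hi
    rw [dist_eq_norm, dist_eq_norm, hdiff]
    exact hK _ htd _

theorem aveMap_bijective {A : Matrix ι ι ℝ}
    (hreg : ∀ d : ι → ℝ, (∀ i, d i ∈ Set.Icc (-1 : ℝ) 1) → IsUnit (A + diagonal d))
    {t : ℝ} (ht : t ∈ Set.Icc (0 : ℝ) 1) : Function.Bijective (aveMap A t) := by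
  obtain ⟨K, hK⟩ := exists_norm_le_mul_norm_add_diagonal_mulVec A hreg
  refine ⟨(antilipschitzWith_aveMap hK ht).injective, ?_⟩
  obtain ⟨N, hN⟩ := exists_nat_gt (K : ℝ)
  have hN0 : (0 : ℝ) < N := K.coe_nonneg.trans_lt hN
  set δ : ℝ≥0 := ⟨t / N, div_nonneg ht.1 hN0.le⟩
  have hδ : (K * δ : ℝ) < 1 :=
    calc (K : ℝ) * (t / N) ≤ K * (1 / N) := by gcongr; exact ht.2
      _ < 1 := by rwa [mul_one_div, div_lt_one hN0]
  have hgrid : ∀ k : ℕ, k ≤ N → (k * δ : ℝ) ∈ Set.Icc (0 : ℝ) 1 := fun k hk =>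
    ⟨by positivity, calc (k : ℝ) * (t / N) ≤ N * (t / N) :=
        mul_le_mul_of_nonneg_right (by exact_mod_cast hk) δ.coe_nonneg
      _ = t := mul_div_cancel₀ t hN0.ne'
      _ ≤ 1 := ht.2⟩
  have hsurj : ∀ k : ℕ, k ≤ N → Function.Surjective (aveMap A (k * δ)) := by
    intro k
    induction k with
    | zero =>
      intro _
      rw [Nat.cast_zero, zero_mul, show aveMap A 0 = A.mulVec from funext fun x => by simp [aveMap]]
      exact mulVec_surjective_iff_isUnit.2 (by simpa using hreg 0 (by simp))
    | succ k ih =>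
      intro hk
      rw [Nat.cast_succ, add_one_mul, aveMap_add]
      have hk' := k.le_succ.trans hk
      exact (antilipschitzWith_aveMap hK (hgrid k hk')).surjective_add_of_lipschitzWith (ih hk')
        (lipschitzWith_smul_abs δ) (by exact_mod_cast hδ)
  simpa only [show (N * δ : ℝ) = t from mul_div_cancel₀ t hN0.ne'] using hsurj N le_rfl

end

theorem isUnit_one_add_of_specRad_lt_one {n : ℕ} {M : Matrix (Fin n) (Fin n) ℝ}
    (h : specRad M < 1) : IsUnit (1 + M) := by
  have hres : (-1 : ℂ) ∈ resolventSet ℂ (M.map Complex.ofReal) :=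
    spectrum.mem_resolventSet_of_spectralRadius_lt <| by
      rwa [nnnorm_neg, nnnorm_one, ENNReal.coe_one]
  rw [spectrum.mem_resolventSet_iff, map_neg, map_one, ← neg_add', IsUnit.neg_iff,
    isUnit_iff_isUnit_det] at hres
  rw [isUnit_iff_isUnit_det, ← isUnit_map_iff Complex.ofRealHom, RingHom.map_det, map_add, map_one]
  exact hres

theorem isUnit_add_diagonal_of_specRad_lt_one {n : ℕ} {A : Matrix (Fin n) (Fin n) ℝ}
    (hA : IsUnit A) {d : Fin n → ℝ} (h : specRad (A⁻¹ * diagonal d) < 1) :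
    IsUnit (A + diagonal d) := by
  have hfactor : A + diagonal d = A * (1 + A⁻¹ * diagonal d) := by
    rw [mul_add, mul_one, ← mul_assoc, mul_nonsing_inv _ ((isUnit_iff_isUnit_det A).1 hA), one_mul]
  rw [hfactor]
  exact hA.mul (isUnit_one_add_of_specRad_lt_one h)

theorem stmt11 {n : ℕ} (A : Matrix (Fin n) (Fin n) ℝ) (hA : IsUnit A)
    (h : ∀ d : Fin n → ℝ, (∀ i, d i ∈ Set.Icc (-1 : ℝ) 1) →
      specRad (A⁻¹ * Matrix.diagonal d) < 1) :
    ∀ b : Fin n → ℝ, ∃! x : Fin n → ℝ, A *ᵥ x + |x| = b := by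
  have hreg : ∀ d : Fin n → ℝ, (∀ i, d i ∈ Set.Icc (-1 : ℝ) 1) → IsUnit (A + diagonal d) :=
    fun d hd => isUnit_add_diagonal_of_specRad_lt_one hA (h d hd)
  simpa [aveMap] using (aveMap_bijective hreg ⟨zero_le_one, le_rfl⟩).existsUnique
end
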